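/- Let N ≥ 2 be an integer, let |ψ_N⟩ = (|0^N⟩ + |1^N⟩)/√2 ∈ (ℂ²)^{⊗N}, and for each of the N qubits v let O_v = I + i·tan(π/(2N))·Z_v, where Z_v is the Pauli Z operator on qubit v tensored with the identity elsewhere. Then ⟨ψ_N| Π_{v=1}^{N} O_v |ψ_N⟩ = 0, and for every v, ‖O_v − I‖ = tan(π/(2N)) ≤ 2/N. In particular, ⟨ψ_N| Π_v O_v |ψ_N⟩ = (1/2)[(1 + i·tan(π/(2N)))^N + (1 − i·tan(π/(2N)))^N] = 0. -/

import Mathlib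

/-! Every operator involved is diagonal in the computational basis, so the GHZ expectation of
`∏ O_v` is the mean of its diagonal entries at `0^N` and `1^N`, namely `(1 ∓ i t)^N` with
`t = tan θ`, `θ = π/(2N)`. Since `cos θ · (1 ± i t) = e^{± iθ}`, their sum is
`2 cos (Nθ) / cos^N θ = 0`. `O_v - I = i t Z_v` has norm `|t| ‖Z_v‖ = t`, and `t ≤ 2/N` is
the chord bound `tan x ≤ 4x/π` on `[0, π/4]` given by the convexity of `tan`. -/

open scoped Classical Matrix

namespace Stmt12

/-- The spin `±1` associated to a Boolean configuration value. -/
def spin (b : Bool) : ℝ := if b then 1 else -1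

/-- The Pauli `Z` operator on the `v`-th of `N` qubits, tensored with the identity
elsewhere on `(ℂ²)^{⊗N}` (a diagonal matrix with entry `±1` according to the value
of the configuration at `v`). -/
noncomputable def pauliZ {N : ℕ} (v : Fin N) :
    Matrix (Fin N → Bool) (Fin N → Bool) ℂ :=
  fun x y => if x = y then ((spin (x v) : ℝ) : ℂ) else 0

/-- The operator `O_v = I + i·tan(π/(2N))·Z_v` on `(ℂ²)^{⊗N}`. -/
noncomputable def Ov {N : ℕ} (v : Fin N) : Matrix (Fin N → Bool) (Fin N → Bool) ℂ :=
  1 + (Complex.I * (Real.tan (Real.pi / (2 * N)) : ℝ)) • pauliZ v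

/-- The GHZ state `|ψ_N⟩ = (|0^N⟩ + |1^N⟩)/√2` as a vector in `(ℂ²)^{⊗N}`. -/
noncomputable def ghz (N : ℕ) : (Fin N → Bool) → ℂ :=
  fun x => if (∀ v, x v = false) ∨ (∀ v, x v = true) then ((Real.sqrt 2)⁻¹ : ℝ) else 0

/-- The ordered product of matrices over a finite (linearly ordered) index set (the
operators `O_v` pairwise commute, so the order is immaterial). -/
noncomputable def oprod {ι : Type*} [LinearOrder ι] {n : Type*} [Fintype n] [DecidableEq n]
    (S : Finset ι) (f : ι → Matrix n n ℂ) : Matrix n n ℂ :=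
  ((S.sort (· ≤ ·)).map f).prod

/-- The operator norm of a matrix, viewed as an operator on Euclidean space. -/
noncomputable def opNorm {n : Type*} [Fintype n] [DecidableEq n]
    (M : Matrix n n ℂ) : ℝ :=
  ‖Matrix.toEuclideanCLM (𝕜 := ℂ) M‖

open Matrix Complex
open scoped Real Matrix.Norms.L2Operator

lemma prod_eq_prod_map_sort {ι M : Type*} [LinearOrder ι] [CommMonoid M] (S : Finset ι)
    (f : ι → M) : ∏ i ∈ S, f i = ((S.sort (· ≤ ·)).map f).prod := by
  rw [Finset.prod_eq_multiset_prod, ← Finset.sort_eq S (· ≤ ·), Multiset.map_coe,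
    Multiset.prod_coe]

lemma oprod_diagonal {ι n : Type*} [LinearOrder ι] [Fintype n] [DecidableEq n]
    (S : Finset ι) (d : ι → n → ℂ) :
    oprod S (fun i => diagonal (d i)) = diagonal (fun x => ∏ i ∈ S, d i x) := by
  simp_rw [← Finset.prod_apply, prod_eq_prod_map_sort, oprod]
  exact (map_list_prod (diagonalRingHom n ℂ) _).trans (by rw [List.map_map]; rfl) |>.symm

lemma opNorm_eq_norm {n : Type*} [Fintype n] [DecidableEq n] (M : Matrix n n ℂ) :
    opNorm M = ‖M‖ := rfl

lemma pi_norm_eq_of_forall_norm_eq {ι E : Type*} [Fintype ι] [Nonempty ι]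
    [SeminormedAddCommGroup E] {f : ι → E} {r : ℝ} (hf : ∀ i, ‖f i‖ = r) :
    ‖f‖ = r := by
  obtain ⟨i⟩ := ‹Nonempty ι›
  refine le_antisymm ((pi_norm_le_iff_of_nonneg ?_).2 fun j => (hf j).le) ?_
  · exact hf i ▸ norm_nonneg _
  · exact hf i ▸ norm_le_pi_norm f i

lemma cos_pow_mul_one_add_I_mul_tan_pow_add_one_sub_I_mul_tan_pow (z : ℂ) (n : ℕ)
    (hz : cos z ≠ 0) :
    cos z ^ n * ((1 + I * tan z) ^ n + (1 - I * tan z) ^ n) = 2 * cos (n * z) := by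
  have h_add : cos z * (1 + I * tan z) = cos z + sin z * I := by
    rw [tan_eq_sin_div_cos]; field_simp
  have h_sub : cos z * (1 - I * tan z) = cos (-z) + sin (-z) * I := by
    rw [tan_eq_sin_div_cos, cos_neg, sin_neg]; field_simp; ring
  rw [mul_add, ← mul_pow, ← mul_pow, h_add, h_sub, cos_add_sin_mul_I_pow, cos_add_sin_mul_I_pow,
    mul_neg, cos_neg, sin_neg]
  ring

lemma convexOn_tan : ConvexOn ℝ (Set.Ico 0 (π / 2)) Real.tan := by
  refine MonotoneOn.convexOn_of_deriv (convex_Ico _ _) ?_ ?_ ?_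
  · exact Real.continuousOn_tan_Ioo.mono fun x hx => ⟨by linarith [hx.1, Real.pi_pos], hx.2⟩
  · rw [interior_Ico]
    exact fun x hx => (Real.differentiableAt_tan_of_mem_Ioo
      ⟨by linarith [hx.1, Real.pi_pos], hx.2⟩).differentiableWithinAt
  · rw [interior_Ico]
    intro x hx y hy hxy
    have hcos : 0 < Real.cos y :=
      Real.cos_pos_of_mem_Ioo ⟨by linarith [hy.1, Real.pi_pos], hy.2⟩
    simp only [Real.deriv_tan]
    gcongr
    exact Real.cos_le_cos_of_nonneg_of_le_pi hx.1.le (by linarith [hy.2, Real.pi_pos]) hxy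

lemma tan_le_four_div_pi_mul {x : ℝ} (hx₀ : 0 ≤ x) (hx : x ≤ π / 4) :
    Real.tan x ≤ 4 / π * x := by
  have hzero : (0 : ℝ) ∈ Set.Ico 0 (π / 2) := ⟨le_rfl, Real.pi_div_two_pos⟩
  have hmem : π / 4 ∈ Set.Ico 0 (π / 2) := ⟨by positivity, by linarith [Real.pi_pos]⟩
  have ht : 4 / π * x ≤ 1 := by rw [div_mul_eq_mul_div, div_le_one Real.pi_pos]; linarith
  have h := convexOn_tan.2 hzero hmem (sub_nonneg.2 ht) (by positivity) (sub_add_cancel 1 _)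
  have hx' : 4 / π * x * (π / 4) = x := by field_simp
  simpa [Real.tan_pi_div_four, hx'] using h

lemma pi_div_two_mul_le_pi_div_four {N : ℕ} (hN : 2 ≤ N) : π / (2 * N) ≤ π / 4 := by
  have hN' : (2 : ℝ) ≤ N := by exact_mod_cast hN
  exact div_le_div_of_nonneg_left Real.pi_pos.le four_pos (by linarith)

lemma one_add_I_mul_tan_pow_add_one_sub_I_mul_tan_pow_eq_zero {N : ℕ} (hN : 2 ≤ N) :
    (1 + I * (Real.tan (π / (2 * N)) : ℝ)) ^ N + (1 - I * (Real.tan (π / (2 * N)) : ℝ)) ^ N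
      = 0 := by
  set θ := π / (2 * N) with hθ
  have hcos : Real.cos θ ≠ 0 := by
    refine (Real.cos_pos_of_mem_Ioo ⟨?_, ?_⟩).ne'
    · linarith [show 0 < θ by positivity, Real.pi_pos]
    · linarith [pi_div_two_mul_le_pi_div_four hN, Real.pi_pos]
  have hNθ : (N : ℂ) * θ = (π / 2 : ℝ) := by
    have hN0 : (N : ℂ) ≠ 0 := by exact_mod_cast (show N ≠ 0 by omega)
    rw [hθ]; push_cast; field_simp
  have h := cos_pow_mul_one_add_I_mul_tan_pow_add_one_sub_I_mul_tan_pow (θ : ℂ) N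
    (by exact_mod_cast hcos)
  rw [hNθ, ← ofReal_cos (π / 2), Real.cos_pi_div_two, ofReal_zero, mul_zero, ← ofReal_tan]
    at h
  exact (mul_eq_zero.1 h).resolve_left (pow_ne_zero _ (by exact_mod_cast hcos))

lemma tan_pi_div_two_mul_le {N : ℕ} (hN : 2 ≤ N) : Real.tan (π / (2 * N)) ≤ 2 / N :=
  calc Real.tan (π / (2 * N)) ≤ 4 / π * (π / (2 * N)) :=
        tan_le_four_div_pi_mul (by positivity) (pi_div_two_mul_le_pi_div_four hN)
    _ = 2 / N := by field_simp; ring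

lemma norm_spin (b : Bool) : ‖((spin b : ℝ) : ℂ)‖ = 1 := by
  cases b <;> simp [spin]

lemma pauliZ_eq_diagonal {N : ℕ} (v : Fin N) :
    pauliZ v = diagonal (fun x => ((spin (x v) : ℝ) : ℂ)) := rfl

lemma opNorm_pauliZ {N : ℕ} (v : Fin N) : opNorm (pauliZ v) = 1 := by
  rw [opNorm_eq_norm, pauliZ_eq_diagonal, l2_opNorm_diagonal]
  exact pi_norm_eq_of_forall_norm_eq fun x => norm_spin (x v)

lemma Ov_eq_diagonal {N : ℕ} (v : Fin N) :
    Ov v = diagonal (fun x =>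
      1 + I * (Real.tan (π / (2 * N)) : ℝ) * ((spin (x v) : ℝ) : ℂ)) := by
  rw [Ov, pauliZ_eq_diagonal, ← diagonal_smul, ← diagonal_one, diagonal_add]
  rfl

lemma opNorm_Ov_sub_one {N : ℕ} (hN : 2 ≤ N) (v : Fin N) :
    opNorm (Ov v - 1) = Real.tan (π / (2 * N)) := by
  have htan : 0 ≤ Real.tan (π / (2 * N)) :=
    Real.tan_nonneg_of_nonneg_of_le_pi_div_two (by positivity)
      (by linarith [pi_div_two_mul_le_pi_div_four hN, Real.pi_pos])
  rw [Ov, add_sub_cancel_left, opNorm_eq_norm, norm_smul, ← opNorm_eq_norm, opNorm_pauliZ,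
    mul_one, norm_mul, norm_I, one_mul, norm_real, Real.norm_of_nonneg htan]

lemma ghz_eq_zero {N : ℕ} {x : Fin N → Bool} (h₀ : x ≠ fun _ => false)
    (h₁ : x ≠ fun _ => true) :
    ghz N x = 0 := by
  rw [ghz, if_neg]
  rintro (h | h)
  exacts [h₀ (funext h), h₁ (funext h)]

lemma ghz_const (N : ℕ) (b : Bool) : ghz N (fun _ => b) = ((Real.sqrt 2)⁻¹ : ℝ) := by
  cases b <;> simp [ghz]

lemma ghz_dotProduct_diagonal_mulVec {N : ℕ} (hN : N ≠ 0) (f : (Fin N → Bool) → ℂ) :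
    star (ghz N) ⬝ᵥ diagonal f *ᵥ ghz N
      = (1 / 2 : ℂ) * (f (fun _ => false) + f (fun _ => true)) := by
  have hne : (fun _ => false : Fin N → Bool) ≠ fun _ => true := fun h =>
    Bool.false_ne_true (congrFun h ⟨0, Nat.pos_of_ne_zero hN⟩)
  have hsq : (((Real.sqrt 2)⁻¹ : ℝ) : ℂ) * ((Real.sqrt 2)⁻¹ : ℝ) = 1 / 2 := by
    rw [← ofReal_mul, ← mul_inv, Real.mul_self_sqrt zero_le_two]; norm_num
  rw [dotProduct, Fintype.sum_eq_add _ _ hne fun x hx => by simp [ghz_eq_zero hx.1 hx.2]]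
  simp only [mulVec_diagonal, Pi.star_apply, ghz_const, star_def, conj_ofReal]
  linear_combination (f (fun _ => false) + f (fun _ => true)) * hsq

/-- **Theorem 8 of the paper.** For the GHZ state `|ψ_N⟩` (`N ≥ 2`) and the operators
`O_v = I + i·tan(π/(2N))·Z_v`, the expectation value `⟨ψ_N| Π_v O_v |ψ_N⟩` equals
`(1/2)[(1 + i·tan(π/(2N)))^N + (1 − i·tan(π/(2N)))^N] = 0`, while
`‖O_v − I‖ = tan(π/(2N)) ≤ 2/N` for every `v`. -/
theorem ghz_zero_expectation (N : ℕ) (hN : 2 ≤ N) :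
    (star (ghz N) ⬝ᵥ (oprod (Finset.univ : Finset (Fin N)) Ov) *ᵥ ghz N) =
        (1 / 2 : ℂ) *
          ((1 + Complex.I * (Real.tan (Real.pi / (2 * N)) : ℝ)) ^ N +
            (1 - Complex.I * (Real.tan (Real.pi / (2 * N)) : ℝ)) ^ N) ∧
    (star (ghz N) ⬝ᵥ (oprod (Finset.univ : Finset (Fin N)) Ov) *ᵥ ghz N) = 0 ∧
    (∀ v : Fin N, opNorm (Ov v - 1) = Real.tan (Real.pi / (2 * N))) ∧
    Real.tan (Real.pi / (2 * N)) ≤ 2 / N := by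
  have hexp : star (ghz N) ⬝ᵥ (oprod Finset.univ Ov) *ᵥ ghz N =
      (1 / 2 : ℂ) * ((1 + I * (Real.tan (π / (2 * N)) : ℝ)) ^ N +
        (1 - I * (Real.tan (π / (2 * N)) : ℝ)) ^ N) := by
    rw [funext Ov_eq_diagonal, oprod_diagonal, ghz_dotProduct_diagonal_mulVec (by omega)]
    simp [spin, sub_eq_add_neg, add_comm]
  refine ⟨hexp, ?_, opNorm_Ov_sub_one hN, tan_pi_div_two_mul_le hN⟩
  rw [hexp, one_add_I_mul_tan_pow_add_one_sub_I_mul_tan_pow_eq_zero hN, mul_zero]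

end Stmt12
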